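/- For a bi-infinite strictly increasing knot sequence (t_j), for every degree m ≥ 0 and every u with t_k ≤ u < t_{k+1}, the sum of the B-spline basis functions N_{mi}(u) over all indices i with k - m ≤ i ≤ k equals 1 (partition of unity). -/

import Mathlib

/-!
With `ω_{m,i}(u) = (u - tᵢ)/(t_{i+m} - tᵢ)` the recursion reads
`N_{m+1,i} = ω_{m+1,i} N_{m,i} + (1 - ω_{m+1,i+1}) N_{m,i+1}`, so in the sum of degree `m + 1`
the `ω`-terms cancel in pairs and it collapses to the sum of degree `m`; the two boundary terms
vanish because `N_{m,i}` is supported in `[tᵢ, t_{i+m+1})`. Induction on `m` from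
`N_{0,k}(u) = 1`.
-/

/-- B-spline basis functions `N_{m,i}` over a bi-infinite knot sequence `t`,
defined by the Boor–Mansfield–Cox recursion:
`N_{0,i}(u) = 1` if `u ∈ [t i, t (i+1))` and `0` otherwise, and
`N_{m,i}(u) = (u - tᵢ)/(t_{m+i} - tᵢ) · N_{m-1,i}(u)
  + (t_{m+i+1} - u)/(t_{m+i+1} - t_{i+1}) · N_{m-1,i+1}(u)`. -/
noncomputable def bsplineN (t : ℤ → ℝ) : ℕ → ℤ → ℝ → ℝ
  | 0, i, u => if t i ≤ u ∧ u < t (i + 1) then 1 else 0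
  | m + 1, i, u =>
      (u - t i) / (t (i + (m + 1)) - t i) * bsplineN t m i u +
        (t (i + (m + 1) + 1) - u) / (t (i + (m + 1) + 1) - t (i + 1)) *
          bsplineN t m (i + 1) u

theorem Finset.sum_Icc_sub_one_add_shift {M : Type*} [AddCommMonoid M] (f g : ℤ → M) {a b : ℤ}
    (hab : a ≤ b + 1) (hf : f (a - 1) = 0) (hg : g (b + 1) = 0) :
    ∑ i ∈ Icc (a - 1) b, (f i + g (i + 1)) = ∑ i ∈ Icc a b, (f i + g i) := by
  have hf_sum : ∑ i ∈ Icc (a - 1) b, f i = ∑ i ∈ Icc a b, f i := by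
    rw [← Order.pred_eq_sub_one, ← insert_Icc_left_eq_Icc_pred (by simpa using hab),
      sum_insert (by simp), Order.pred_eq_sub_one, hf, zero_add]
  have hg_sum : ∑ i ∈ Icc (a - 1) b, g (i + 1) = ∑ i ∈ Icc a b, g i := by
    have hshift := sum_map (Icc (a - 1) b) (addRightEmbedding 1) g
    simp only [map_add_right_Icc, sub_add_cancel, addRightEmbedding_apply] at hshift
    rw [← hshift, ← Order.succ_eq_add_one,
      ← insert_Icc_right_eq_Icc_succ (by simpa using hab), sum_insert (by simp),
      Order.succ_eq_add_one, hg, zero_add]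
  rw [sum_add_distrib, sum_add_distrib, hf_sum, hg_sum]

section BSpline

variable {t : ℤ → ℝ}

theorem bsplineN_eq_zero_of_lt_knot (ht : Monotone t) {m : ℕ} {i : ℤ} {u : ℝ} (hu : u < t i) :
    bsplineN t m i u = 0 := by
  induction m generalizing i with
  | zero => simp [bsplineN, hu.not_ge]
  | succ m ih => simp [bsplineN, ih hu, ih (hu.trans_le (ht (Int.le_add_one le_rfl)))]

theorem bsplineN_eq_zero_of_knot_le (ht : Monotone t) {m : ℕ} {i : ℤ} {u : ℝ}
    (hu : t (i + m + 1) ≤ u) : bsplineN t m i u = 0 := by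
  induction m generalizing i with
  | zero => simp_all [bsplineN]
  | succ m ih =>
    have h₀ : bsplineN t m i u = 0 := ih ((ht (by push_cast; omega)).trans hu)
    have h₁ : bsplineN t m (i + 1) u = 0 := ih (by convert hu using 2; push_cast; ring)
    simp [bsplineN, h₀, h₁]

noncomputable def bsplineWeight (t : ℤ → ℝ) (m : ℕ) (i : ℤ) (u : ℝ) : ℝ :=
  (u - t i) / (t (i + m) - t i)

theorem bsplineN_succ (ht : Function.Injective t) (m : ℕ) (i : ℤ) (u : ℝ) :
    bsplineN t (m + 1) i u = bsplineWeight t (m + 1) i u * bsplineN t m i u +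
      (1 - bsplineWeight t (m + 1) (i + 1) u) * bsplineN t m (i + 1) u := by
  have hne : t (i + 1 + (m + 1 : ℕ)) - t (i + 1) ≠ 0 :=
    sub_ne_zero.2 (ht.ne (by omega))
  have hidx : i + 1 + ((m + 1 : ℕ) : ℤ) = i + (m + 1) + 1 := by push_cast; ring
  rw [bsplineN, bsplineWeight, bsplineWeight, one_sub_div hne, hidx]
  push_cast
  ring

theorem sum_Icc_bsplineN_succ (ht : StrictMono t) (m : ℕ) {k : ℤ} {u : ℝ}
    (hu₀ : t k ≤ u) (hu₁ : u < t (k + 1)) :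
    ∑ i ∈ Finset.Icc (k - (m + 1 : ℕ)) k, bsplineN t (m + 1) i u =
      ∑ i ∈ Finset.Icc (k - m) k, bsplineN t m i u := by
  have hlow : k - ((m + 1 : ℕ) : ℤ) = k - m - 1 := by push_cast; ring
  have hbelow : bsplineN t m (k - m - 1) u = 0 :=
    bsplineN_eq_zero_of_knot_le ht.monotone (by rwa [show k - m - 1 + m + 1 = k by ring])
  have habove : bsplineN t m (k + 1) u = 0 := bsplineN_eq_zero_of_lt_knot ht.monotone hu₁
  simp only [bsplineN_succ ht.injective, hlow]
  rw [Finset.sum_Icc_sub_one_add_shift (fun i => bsplineWeight t (m + 1) i u * bsplineN t m i u)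
    (fun i => (1 - bsplineWeight t (m + 1) i u) * bsplineN t m i u) (by omega)
    (by simp only [hbelow, mul_zero]) (by simp only [habove, mul_zero])]
  exact Finset.sum_congr rfl fun i _ => by ring

end BSpline

/-- Partition of unity: for every degree `m` and every `u ∈ [t k, t (k+1))`,
the B-spline basis functions `N_{m,i}` for `k - m ≤ i ≤ k` sum to `1`. -/
theorem stmt9 (t : ℤ → ℝ) (ht : StrictMono t) (m : ℕ) (k : ℤ) (u : ℝ)
    (hu₀ : t k ≤ u) (hu₁ : u < t (k + 1)) :
    ∑ i ∈ Finset.Icc (k - m) k, bsplineN t m i u = 1 := by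
  induction m with
  | zero => rw [Nat.cast_zero, sub_zero, Finset.Icc_self, Finset.sum_singleton, bsplineN,
      if_pos ⟨hu₀, hu₁⟩]
  | succ m ih => rw [sum_Icc_bsplineN_succ ht m hu₀ hu₁, ih]
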